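/- Let q be a prime power and let k, d, v₁, v₂ be integers with 1 ≤ d ≤ k ≤ min{v₁, v₂}. Then A_q(v₁ + v₂ + k, 2d; k) ≥ q^{(v₁+v₂)(k−d+1)} + A_q(v₁, 2d; k) + A_q(v₂, 2d; k). -/

import Mathlib

open Finset Filter

/-- The subspace distance between two subspaces:
`d_S(U,W) = dim(U + W) - dim(U ∩ W)`. -/
noncomputable def subDist {F : Type*} [Field F] {v : ℕ} (U W : Submodule F (Fin v → F)) : ℕ :=
  Module.finrank F ↥(U ⊔ W) - Module.finrank F ↥(U ⊓ W)

/-- `Aq F v d k` is the maximum size of a set of `k`-dimensional subspaces of `F^v`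
whose pairwise subspace distances are at least `d`. -/
noncomputable def Aq (F : Type*) [Field F] [Fintype F] (v d k : ℕ) : ℕ :=
  sSup {n | ∃ C : Finset (Submodule F (Fin v → F)),
    (∀ U ∈ C, Module.finrank F ↥U = k) ∧
    (∀ U ∈ C, ∀ W ∈ C, U ≠ W → d ≤ subDist U W) ∧ C.card = n}

/-!
Let `K = 𝔽_{q^m}` with `m = v₁ + v₂` and embed `F^k` into `K` by an injective `ι`. In `F^k × K`,
the graphs of `x ↦ L(ι x)`, for the linearized polynomials `L = ∑_{i ≤ k - d} cᵢ X^{q^i}`, form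
a lifted Gabidulin code with `q^{m(k-d+1)}` elements: two graphs meet in the kernel of `L - L'`,
which has dimension at most `k - d` because a nonzero linearized polynomial of `q`-degree
`k - d` has at most `q^{k-d}` roots. Every graph meets `0 × K` trivially, so any code in
`0 × K ≅ F^{v₁} × F^{v₂}` can be added; take optimal codes in `F^{v₁} × 0` and `0 × F^{v₂}`,
which meet each other trivially.
-/

open Module Polynomial

section ConstDimCode

variable {F M N : Type*} [Field F] [AddCommGroup M] [Module F M] [AddCommGroup N] [Module F N]

lemma Submodule.finrank_map_of_injective {f : M →ₗ[F] N} (hf : Function.Injective f)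
    (U : Submodule F M) : finrank F (U.map f) = finrank F U :=
  (Submodule.equivMapOfInjective f hf U).finrank_eq.symm

theorem LinearMap.exists_injective_of_finrank_le [FiniteDimensional F M] [FiniteDimensional F N]
    (h : finrank F M ≤ finrank F N) : ∃ f : M →ₗ[F] N, Function.Injective f :=
  let e : (M × (Fin (finrank F N - finrank F M) → F)) ≃ₗ[F] N :=
    LinearEquiv.ofFinrankEq _ _ (by rw [finrank_prod, finrank_fin_fun]; omega)
  ⟨e.toLinearMap ∘ₗ LinearMap.inl F _ _, e.injective.comp LinearMap.inl_injective⟩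

variable (F) in
/-- `k`-dimensional subspaces meeting pairwise in dimension at most `k - d`; in `F^v` this is
subspace distance at least `2 * d` (`two_mul_le_subDist_iff`). -/
def IsConstDimCode (k d : ℕ) (C : Finset (Submodule F M)) : Prop :=
  (∀ U ∈ C, finrank F U = k) ∧
    (C : Set (Submodule F M)).Pairwise fun U W => finrank F ↥(U ⊓ W) + d ≤ k

namespace IsConstDimCode

variable {k d : ℕ} {C C₁ C₂ : Finset (Submodule F M)}

theorem image_map (hC : IsConstDimCode F k d C) {f : M →ₗ[F] N} (hf : Function.Injective f) :
    IsConstDimCode F k d (C.image (Submodule.map f)) := by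
  have hinj : Function.Injective (Submodule.map f) := Submodule.map_injective_of_injective hf
  refine ⟨?_, ?_⟩
  · simp only [Finset.mem_image, forall_exists_index, and_imp]
    rintro _ U hU rfl
    rw [Submodule.finrank_map_of_injective hf, hC.1 U hU]
  · rw [Finset.coe_image, hinj.injOn.pairwise_image]
    intro U hU W hW hUW
    change finrank F ↥(U.map f ⊓ W.map f) + d ≤ k
    rw [← Submodule.map_inf f hf, Submodule.finrank_map_of_injective hf]
    exact hC.2 hU hW hUW

theorem union (h₁ : IsConstDimCode F k d C₁) (h₂ : IsConstDimCode F k d C₂) (hdk : d ≤ k)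
    (h : ∀ U ∈ C₁, ∀ W ∈ C₂, U ⊓ W = ⊥) : IsConstDimCode F k d (C₁ ∪ C₂) := by
  refine ⟨fun U hU => (Finset.mem_union.mp hU).elim (h₁.1 U) (h₂.1 U), ?_⟩
  have : Std.Symm fun U W : Submodule F M => finrank F ↥(U ⊓ W) + d ≤ k :=
    ⟨fun U W => by rw [inf_comm]; exact id⟩
  rw [Finset.coe_union, Set.pairwise_union_of_symm]
  refine ⟨h₁.2, h₂.2, fun U hU W hW _ => ?_⟩
  rw [h U hU W hW, finrank_bot]
  omega

theorem disjoint_of_inf_eq_bot (h₁ : IsConstDimCode F k d C₁) (hk : k ≠ 0)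
    (h : ∀ U ∈ C₁, ∀ W ∈ C₂, U ⊓ W = ⊥) : Disjoint C₁ C₂ := by
  refine Finset.disjoint_left.mpr fun U hU₁ hU₂ => hk ?_
  rw [← h₁.1 U hU₁, ← inf_idem U, h U hU₁ U hU₂, finrank_bot]

end IsConstDimCode

end ConstDimCode

section Graph

variable {F M N : Type*} [Field F] [AddCommGroup M] [Module F M] [AddCommGroup N] [Module F N]

namespace LinearMap

theorem graph_injective : Function.Injective (graph : (M →ₗ[F] N) → Submodule F (M × N)) := by
  intro f g h
  ext x
  have : (x, f x) ∈ g.graph := h ▸ (mem_graph_iff f _).mpr rfl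
  exact (mem_graph_iff g _).mp this

theorem finrank_graph [FiniteDimensional F M] (f : M →ₗ[F] N) :
    finrank F f.graph = finrank F M := by
  rw [graph_eq_range_prod, LinearMap.finrank_range_of_inj]
  exact fun x y h => congrArg Prod.fst h

theorem graph_inf_graph (f g : M →ₗ[F] N) :
    f.graph ⊓ g.graph = (ker (f - g)).map (LinearMap.id.prod f) := by
  ext ⟨x, y⟩
  simp only [Submodule.mem_inf, mem_graph_iff, Submodule.mem_map, mem_ker, sub_apply,
    sub_eq_zero, prod_apply]
  constructor
  · rintro ⟨rfl, h⟩
    exact ⟨x, h, rfl⟩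
  · rintro ⟨x, h, hx⟩
    obtain ⟨rfl, rfl⟩ := Prod.mk.inj hx
    exact ⟨rfl, h⟩

theorem finrank_graph_inf_graph (f g : M →ₗ[F] N) :
    finrank F ↥(f.graph ⊓ g.graph) = finrank F (LinearMap.ker (f - g)) := by
  rw [graph_inf_graph, Submodule.finrank_map_of_injective]
  exact fun x y h => congrArg Prod.fst h

theorem graph_inf_eq_bot_of_le_range_inr (f : M →ₗ[F] N) {U : Submodule F (M × N)}
    (hU : U ≤ range (inr F M N)) : f.graph ⊓ U = ⊥ := by
  refine eq_bot_iff.mpr fun x ⟨hx, hxU⟩ => ?_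
  obtain ⟨y, rfl⟩ := hU hxU
  have hy : y = f 0 := (mem_graph_iff f _).mp hx
  simp [hy]

end LinearMap

theorem isConstDimCode_image_graph [FiniteDimensional F M] {α : Type*} {d : ℕ} (S : Finset α)
    (f : α → M →ₗ[F] N)
    (hS : (S : Set α).Pairwise fun a b => finrank F (LinearMap.ker (f a - f b)) + d ≤ finrank F M) :
    IsConstDimCode F (finrank F M) d (S.image fun a => (f a).graph) := by
  refine ⟨?_, ?_⟩
  · simp only [Finset.mem_image, forall_exists_index, and_imp]
    rintro _ a _ rfl
    exact (f a).finrank_graph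
  · intro U hU W hW hUW
    obtain ⟨a, ha, rfl⟩ := Finset.mem_image.mp hU
    obtain ⟨b, hb, rfl⟩ := Finset.mem_image.mp hW
    rw [LinearMap.finrank_graph_inf_graph]
    exact hS ha hb fun h => hUW (h ▸ rfl)

end Graph

section SumCode

variable {F M N : Type*} [Field F] [AddCommGroup M] [Module F M] [AddCommGroup N] [Module F N]
  {k d : ℕ} {C₁ : Finset (Submodule F M)} {C₂ : Finset (Submodule F N)}

theorem inf_eq_bot_of_mem_image_map_inl_of_mem_image_map_inr {U W : Submodule F (M × N)}
    (hU : U ∈ C₁.image (Submodule.map (LinearMap.inl F M N)))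
    (hW : W ∈ C₂.image (Submodule.map (LinearMap.inr F M N))) : U ⊓ W = ⊥ := by
  obtain ⟨U, -, rfl⟩ := Finset.mem_image.mp hU
  obtain ⟨W, -, rfl⟩ := Finset.mem_image.mp hW
  exact (LinearMap.disjoint_inl_inr.mono LinearMap.map_le_range LinearMap.map_le_range).eq_bot

theorem IsConstDimCode.sum (h₁ : IsConstDimCode F k d C₁) (h₂ : IsConstDimCode F k d C₂)
    (hdk : d ≤ k) :
    IsConstDimCode F k d (C₁.image (Submodule.map (LinearMap.inl F M N)) ∪
      C₂.image (Submodule.map (LinearMap.inr F M N))) :=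
  (h₁.image_map LinearMap.inl_injective).union (h₂.image_map LinearMap.inr_injective) hdk
    fun _ hU _ hW => inf_eq_bot_of_mem_image_map_inl_of_mem_image_map_inr hU hW

theorem IsConstDimCode.card_sum (h₁ : IsConstDimCode F k d C₁) (hk : k ≠ 0) :
    (C₁.image (Submodule.map (LinearMap.inl F M N)) ∪
      C₂.image (Submodule.map (LinearMap.inr F M N))).card = C₁.card + C₂.card := by
  have hdisj := (h₁.image_map LinearMap.inl_injective).disjoint_of_inf_eq_bot (C₂ := C₂.image
    (Submodule.map (LinearMap.inr F M N))) hk fun _ hU _ hW =>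
      inf_eq_bot_of_mem_image_map_inl_of_mem_image_map_inr hU hW
  rw [Finset.card_union_of_disjoint hdisj,
    Finset.card_image_of_injective _ (Submodule.map_injective_of_injective LinearMap.inl_injective),
    Finset.card_image_of_injective _ (Submodule.map_injective_of_injective LinearMap.inr_injective)]

end SumCode

section Aq

variable {F : Type*} [Field F] {v k d : ℕ}

theorem two_mul_le_subDist_iff {U W : Submodule F (Fin v → F)} (hU : finrank F U = k)
    (hW : finrank F W = k) : 2 * d ≤ subDist U W ↔ finrank F ↥(U ⊓ W) + d ≤ k := by
  have hsum := Submodule.finrank_sup_add_finrank_inf_eq U W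
  have hle : finrank F ↥(U ⊓ W) ≤ finrank F U := Submodule.finrank_mono inf_le_left
  rw [subDist]
  omega

theorem isConstDimCode_iff {C : Finset (Submodule F (Fin v → F))} :
    IsConstDimCode F k d C ↔ (∀ U ∈ C, finrank F U = k) ∧
      ∀ U ∈ C, ∀ W ∈ C, U ≠ W → 2 * d ≤ subDist U W := by
  refine and_congr_right fun hC => forall₂_congr fun U hU => forall₂_congr fun W hW => ?_
  rw [two_mul_le_subDist_iff (hC U hU) (hC W hW)]

variable [Fintype F]

theorem bddAbove_Aq_set (v d k : ℕ) : BddAbove {n | ∃ C : Finset (Submodule F (Fin v → F)),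
    (∀ U ∈ C, finrank F U = k) ∧ (∀ U ∈ C, ∀ W ∈ C, U ≠ W → d ≤ subDist U W) ∧ C.card = n} :=
  ((Set.finite_range Finset.card).subset <| by rintro _ ⟨C, -, -, rfl⟩; exact ⟨C, rfl⟩).bddAbove

theorem exists_isConstDimCode_card_eq_Aq (v k d : ℕ) :
    ∃ C : Finset (Submodule F (Fin v → F)), IsConstDimCode F k d C ∧ C.card = Aq F v (2 * d) k := by
  obtain ⟨C, h₁, h₂, hC⟩ :=
    Nat.sSup_mem (by exact ⟨0, ∅, by simp, by simp, rfl⟩) (bddAbove_Aq_set (F := F) v (2 * d) k)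
  exact ⟨C, isConstDimCode_iff.mpr ⟨h₁, h₂⟩, hC⟩

theorem IsConstDimCode.card_le_Aq {M : Type*} [AddCommGroup M] [Module F M]
    {C : Finset (Submodule F M)} (hC : IsConstDimCode F k d C) (e : M ≃ₗ[F] (Fin v → F)) :
    C.card ≤ Aq F v (2 * d) k := by
  obtain ⟨h₁, h₂⟩ := isConstDimCode_iff.mp (hC.image_map e.injective)
  rw [← Finset.card_image_of_injective C (Submodule.map_injective_of_injective e.injective)]
  exact le_csSup (bddAbove_Aq_set v (2 * d) k) ⟨_, h₁, h₂, rfl⟩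

end Aq

section Linearized

open FiniteField

variable {F K : Type*} [Field F] [Fintype F] [Field K] {t : ℕ}

variable (F) in
noncomputable def linearizedPoly (c : Fin (t + 1) → K) : K[X] :=
  ∑ i, C (c i) * X ^ Fintype.card F ^ (i : ℕ)

theorem coeff_linearizedPoly (c : Fin (t + 1) → K) (j : Fin (t + 1)) :
    (linearizedPoly F c).coeff (Fintype.card F ^ (j : ℕ)) = c j := by
  rw [linearizedPoly, finsetSum_coeff, Finset.sum_eq_single j]
  · simp
  · intro i _ hij
    rw [coeff_C_mul, coeff_X_pow, if_neg, mul_zero]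
    exact fun h => hij (Fin.ext (Nat.pow_right_injective Fintype.one_lt_card h).symm)
  · simp

theorem linearizedPoly_ne_zero {c : Fin (t + 1) → K} (hc : c ≠ 0) : linearizedPoly F c ≠ 0 := by
  obtain ⟨j, hj⟩ := Function.ne_iff.mp hc
  intro h
  exact hj (by rw [← coeff_linearizedPoly (F := F) c j, h, coeff_zero, Pi.zero_apply])

theorem natDegree_linearizedPoly_le (c : Fin (t + 1) → K) :
    (linearizedPoly F c).natDegree ≤ Fintype.card F ^ t := by
  refine natDegree_sum_le_of_forall_le _ _ fun i _ => (natDegree_C_mul_le _ _).trans ?_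
  rw [natDegree_X_pow]
  exact Nat.pow_le_pow_right Fintype.card_pos (Nat.lt_succ_iff.mp i.2)

variable [Algebra F K]

variable (F) in
noncomputable def linearizedMap (t : ℕ) : (Fin (t + 1) → K) →ₗ[K] K →ₗ[F] K :=
  Fintype.linearCombination K fun i => (frobeniusAlgHom F K ^ (i : ℕ)).toLinearMap

theorem linearizedMap_apply (c : Fin (t + 1) → K) (x : K) :
    linearizedMap F t c x = (linearizedPoly F c).eval x := by
  simp [linearizedMap, linearizedPoly, Fintype.linearCombination_apply, eval_finsetSum,
    AlgHom.coe_pow, coe_frobeniusAlgHom, pow_iterate]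

theorem finrank_le_of_forall_linearizedMap_eq_zero {c : Fin (t + 1) → K} (hc : c ≠ 0)
    (W : Submodule F K) (hW : ∀ x ∈ W, linearizedMap F t c x = 0) : finrank F W ≤ t := by
  classical
  set P := linearizedPoly F c
  have hsub : (W : Set K) ⊆ P.roots.toFinset := fun x hx => by
    rw [Finset.mem_coe, Multiset.mem_toFinset, mem_roots (linearizedPoly_ne_zero hc), IsRoot,
      ← linearizedMap_apply]
    exact hW x hx
  have : Finite W := (P.roots.toFinset.finite_toSet.subset hsub).to_subtype
  have hcard : Nat.card W ≤ Fintype.card F ^ t :=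
    calc Nat.card W ≤ Nat.card (P.roots.toFinset : Set K) :=
          Nat.card_mono (Finset.finite_toSet _) hsub
      _ = P.roots.toFinset.card := Nat.card_coe_set_eq _ |>.trans (Set.ncard_coe_finset _)
      _ ≤ Multiset.card P.roots := Multiset.toFinset_card_le _
      _ ≤ P.natDegree := P.card_roots'
      _ ≤ Fintype.card F ^ t := natDegree_linearizedPoly_le c
  rw [Module.natCard_eq_pow_finrank (K := F), Nat.card_eq_fintype_card] at hcard
  exact (Nat.pow_le_pow_iff_right Fintype.one_lt_card).mp hcard

end Linearized

section Gabidulin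

variable {F K V : Type*} [Field F] [Fintype F] [Field K] [Algebra F K] [AddCommGroup V]
  [Module F V] {ι : V →ₗ[F] K} {t : ℕ}

theorem finrank_ker_linearizedMap_comp_le (hι : Function.Injective ι) {c : Fin (t + 1) → K}
    (hc : c ≠ 0) : finrank F (LinearMap.ker ((linearizedMap F t c).comp ι)) ≤ t := by
  rw [← Submodule.finrank_map_of_injective hι]
  refine finrank_le_of_forall_linearizedMap_eq_zero hc _ ?_
  rintro _ ⟨x, hx, rfl⟩
  exact hx

variable [Fintype K]

variable (F) in
noncomputable def liftedGabidulinCode (ι : V →ₗ[F] K) (t : ℕ) : Finset (Submodule F (V × K)) :=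
  Finset.univ.image fun c : Fin (t + 1) → K => ((linearizedMap F t c).comp ι).graph

theorem isConstDimCode_liftedGabidulinCode [FiniteDimensional F V] (hι : Function.Injective ι)
    (t : ℕ) :
    IsConstDimCode F (finrank F V) (finrank F V - t) (liftedGabidulinCode F ι t) := by
  refine isConstDimCode_image_graph _ _ fun c _ c' _ hne => ?_
  have hcc' : c - c' ≠ 0 := sub_ne_zero.mpr hne
  have hker := finrank_ker_linearizedMap_comp_le hι hcc'
  have hV := Submodule.finrank_le (LinearMap.ker ((linearizedMap F t (c - c')).comp ι))
  rw [map_sub, LinearMap.sub_comp] at hker hV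
  omega

theorem card_liftedGabidulinCode (hι : Function.Injective ι) (ht : t < finrank F V) :
    (liftedGabidulinCode F ι t).card = Fintype.card K ^ (t + 1) := by
  have hinj :
      Function.Injective fun c : Fin (t + 1) → K => ((linearizedMap F t c).comp ι).graph := by
    intro c c' h
    by_contra hne
    have hker := finrank_ker_linearizedMap_comp_le hι (sub_ne_zero.mpr hne)
    rw [map_sub, LinearMap.sub_comp, LinearMap.graph_injective h, sub_self, LinearMap.ker_zero,
      finrank_top] at hker
    omega
  rw [liftedGabidulinCode, Finset.card_image_of_injective _ hinj, Finset.card_univ,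
    Fintype.card_fun, Fintype.card_fin]

end Gabidulin

section Linkage

variable {F K V : Type*} [Field F] [Fintype F] [Field K] [Fintype K] [Algebra F K]
  [AddCommGroup V] [Module F V] {ι : V →ₗ[F] K} {k d : ℕ}
  {D : Finset (Submodule F K)}

theorem liftedGabidulinCode_inf_eq_bot {U W : Submodule F (V × K)} (t : ℕ)
    (hU : U ∈ liftedGabidulinCode F ι t) (hW : W ∈ D.image (Submodule.map (LinearMap.inr F V K))) :
    U ⊓ W = ⊥ := by
  obtain ⟨c, -, rfl⟩ := Finset.mem_image.mp hU
  obtain ⟨S, -, rfl⟩ := Finset.mem_image.mp hW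
  exact LinearMap.graph_inf_eq_bot_of_le_range_inr _ LinearMap.map_le_range

theorem isConstDimCode_liftedGabidulinCode_union [FiniteDimensional F V] (hι : Function.Injective ι)
    (hV : finrank F V = k) (hdk : d ≤ k) (hD : IsConstDimCode F k d D) :
    IsConstDimCode F k d
      (liftedGabidulinCode F ι (k - d) ∪ D.image (Submodule.map (LinearMap.inr F V K))) := by
  have hG := isConstDimCode_liftedGabidulinCode hι (k - d)
  rw [hV, Nat.sub_sub_self hdk] at hG
  exact hG.union (hD.image_map LinearMap.inr_injective) hdk fun _ hU _ hW =>
    liftedGabidulinCode_inf_eq_bot _ hU hW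

theorem card_liftedGabidulinCode_union [FiniteDimensional F V] (hι : Function.Injective ι)
    (hV : finrank F V = k) (hd : 1 ≤ d) (hdk : d ≤ k) :
    (liftedGabidulinCode F ι (k - d) ∪ D.image (Submodule.map (LinearMap.inr F V K))).card =
      Fintype.card K ^ (k - d + 1) + D.card := by
  have hG := isConstDimCode_liftedGabidulinCode hι (k - d)
  rw [Finset.card_union_of_disjoint (hG.disjoint_of_inf_eq_bot (by omega) fun _ hU _ hW =>
      liftedGabidulinCode_inf_eq_bot _ hU hW),
    card_liftedGabidulinCode hι (by omega),
    Finset.card_image_of_injective _ (Submodule.map_injective_of_injective LinearMap.inr_injective)]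

end Linkage

theorem stmt12_general (q : ℕ) (F : Type) [Field F] [Fintype F] (hF : Fintype.card F = q)
    (k d v₁ v₂ : ℕ) (hd : 1 ≤ d) (hdk : d ≤ k) (hkv₁ : k ≤ v₁) :
    q ^ ((v₁ + v₂) * (k - d + 1)) + Aq F v₁ (2 * d) k + Aq F v₂ (2 * d) k ≤
      Aq F (v₁ + v₂ + k) (2 * d) k := by
  subst hF
  have : Fact (ringChar F).Prime := ⟨CharP.char_is_prime F _⟩
  have : NeZero (v₁ + v₂) := ⟨by omega⟩
  let K := FiniteField.Extension F (ringChar F) (v₁ + v₂)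
  let _ : Fintype K := Fintype.ofFinite K
  have hK : finrank F K = v₁ + v₂ := FiniteField.finrank_extension F _ _
  obtain ⟨ι, hι⟩ := LinearMap.exists_injective_of_finrank_le (M := Fin k → F) (N := K)
    (by rw [finrank_fin_fun, hK]; omega)
  let δ : ((Fin v₁ → F) × (Fin v₂ → F)) ≃ₗ[F] K :=
    LinearEquiv.ofFinrankEq _ _ (by rw [finrank_prod, finrank_fin_fun, finrank_fin_fun, hK])
  obtain ⟨C₁, hC₁, hC₁card⟩ := exists_isConstDimCode_card_eq_Aq (F := F) v₁ k d
  obtain ⟨C₂, hC₂, hC₂card⟩ := exists_isConstDimCode_card_eq_Aq (F := F) v₂ k d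
  have hD := (hC₁.sum hC₂ hdk).image_map δ.injective
  have hV : finrank F (Fin k → F) = k := finrank_fin_fun F
  calc Fintype.card F ^ ((v₁ + v₂) * (k - d + 1)) + Aq F v₁ (2 * d) k + Aq F v₂ (2 * d) k
      = (liftedGabidulinCode F ι (k - d) ∪ _).card := by
        rw [card_liftedGabidulinCode_union hι hV hd hdk, Finset.card_image_of_injective _
          (Submodule.map_injective_of_injective δ.injective), hC₁.card_sum (by omega),
          card_eq_pow_finrank (K := F) (V := K), hK, ← pow_mul, hC₁card, hC₂card, add_assoc]
    _ ≤ Aq F (v₁ + v₂ + k) (2 * d) k :=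
        (isConstDimCode_liftedGabidulinCode_union hι hV hdk hD).card_le_Aq
          (LinearEquiv.ofFinrankEq _ _ (by rw [finrank_prod, hV, hK, finrank_fin_fun, add_comm]))

/-- Corollary (cf. Gluesing-Luerssen–Troha, Theorem 4.6): for `1 ≤ d ≤ k ≤ min{v₁,v₂}`,
`A_q(v₁+v₂+k, 2d; k) ≥ q^{(v₁+v₂)(k-d+1)} + A_q(v₁,2d;k) + A_q(v₂,2d;k)`. -/
theorem stmt12 (q : ℕ) (F : Type) [Field F] [Fintype F] (hF : Fintype.card F = q)
    (k d v₁ v₂ : ℕ) (hd : 1 ≤ d) (hdk : d ≤ k) (hkv₁ : k ≤ v₁) (hkv₂ : k ≤ v₂) :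
    q ^ ((v₁ + v₂) * (k - d + 1)) + Aq F v₁ (2 * d) k + Aq F v₂ (2 * d) k ≤
      Aq F (v₁ + v₂ + k) (2 * d) k :=
  stmt12_general q F hF k d v₁ v₂ hd hdk hkv₁
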